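/- Let α, r > 0, and for each positive real k let δ_k : [0,1] → [0,2] be a measurable function satisfying δ_k(t) ≤ α·k·∫₀ᵗ δ_{k+r}(s) ds for all t ∈ [0,1]. Then for every n ≥ 1 and every k > 0, δ_k(t) ≤ 2·αⁿ·(k + n·r)ⁿ·tⁿ/n!; consequently δ_k(t) = 0 for all t ∈ [0,1] and all k > 0. -/
import Mathlib

open intervalIntegral

section aux

variable (α r : ℝ) (hα : 0 < α) (hr : 0 < r) (δ : ℝ → ℝ → ℝ)
    (hmeas : ∀ k > (0:ℝ), Measurable (δ k))
    (hbd : ∀ k > (0:ℝ), ∀ t ∈ Set.Icc (0:ℝ) 1, δ k t ∈ Set.Icc (0:ℝ) 2)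
    (hineq : ∀ k > (0:ℝ), ∀ t ∈ Set.Icc (0:ℝ) 1,
      δ k t ≤ α * k * ∫ s in (0:ℝ)..t, δ (k + r) s)

include hmeas hbd in
private lemma gw_intInt (k : ℝ) (hk : 0 < k) {a b : ℝ} (ha : 0 ≤ a) (hb1 : b ≤ 1)
    (hab : a ≤ b) : IntervalIntegrable (δ k) MeasureTheory.volume a b := by
  have h : MeasureTheory.IntegrableOn (δ k) (Set.Icc a b) MeasureTheory.volume := by
    apply MeasureTheory.Integrable.mono' (MeasureTheory.integrable_const 2)
      (hmeas k hk).aestronglyMeasurable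
    filter_upwards [MeasureTheory.ae_restrict_mem measurableSet_Icc] with x hx
    have hx1 : x ∈ Set.Icc (0:ℝ) 1 := ⟨ha.trans hx.1, hx.2.trans hb1⟩
    have hb' := hbd k hk x hx1
    rw [Real.norm_eq_abs, abs_of_nonneg hb'.1]
    exact hb'.2
  rw [show Set.Icc a b = Set.uIcc a b from (Set.uIcc_of_le hab).symm] at h
  exact h.intervalIntegrable

include hα hr hmeas hbd hineq in
private lemma gw_key (t0 : ℝ) (ht0 : t0 ∈ Set.Icc (0:ℝ) 1)
    (hzero : ∀ k > (0:ℝ), ∀ s ∈ Set.Icc (0:ℝ) t0, δ k s = 0) :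
    ∀ n : ℕ, ∀ k > (0:ℝ), ∀ t ∈ Set.Icc t0 (1:ℝ),
      δ k t ≤ 2 * α ^ n * (k + n * r) ^ n * (t - t0) ^ n / n.factorial := by
  intro n
  induction n with
  | zero =>
    intro k hk t ht
    simpa using (hbd k hk t ⟨ht0.1.trans ht.1, ht.2⟩).2
  | succ n ih =>
    intro k hk t ht
    have hk' : (0:ℝ) < k + r := by linarith
    have ht1 : t ∈ Set.Icc (0:ℝ) 1 := ⟨ht0.1.trans ht.1, ht.2⟩
    have hI1 : IntervalIntegrable (δ (k+r)) MeasureTheory.volume 0 t0 :=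
      gw_intInt δ hmeas hbd (k+r) hk' le_rfl ht0.2 ht0.1
    have hI2 : IntervalIntegrable (δ (k+r)) MeasureTheory.volume t0 t :=
      gw_intInt δ hmeas hbd (k+r) hk' ht0.1 ht.2 ht.1
    have hzero' : (∫ s in (0:ℝ)..t0, δ (k+r) s) = 0 := by
      rw [intervalIntegral.integral_congr (g := fun _ => 0)]
      · simp
      · intro s hs
        rw [Set.uIcc_of_le ht0.1] at hs
        exact hzero (k+r) hk' s hs
    have hsplit : (∫ s in (0:ℝ)..t, δ (k+r) s) = ∫ s in t0..t, δ (k+r) s := by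
      rw [← intervalIntegral.integral_add_adjacent_intervals hI1 hI2, hzero', zero_add]
    have hmain := hineq k hk t ht1
    rw [hsplit] at hmain
    -- bound the integrand
    set C : ℝ := 2 * α ^ n * (k + r + n * r) ^ n / n.factorial with hC
    have hCpos : 0 ≤ C := by
      have : (0:ℝ) < k + r + n * r := by positivity
      positivity
    have hmono : (∫ s in t0..t, δ (k+r) s) ≤ ∫ s in t0..t, C * (s - t0) ^ n := by
      apply intervalIntegral.integral_mono_on ht.1 hI2
      · apply Continuous.intervalIntegrable
        continuity
      · intro x hx
        have hx1 : x ∈ Set.Icc t0 (1:ℝ) := ⟨hx.1, hx.2.trans ht.2⟩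
        have := ih (k+r) hk' x hx1
        calc δ (k+r) x ≤ 2 * α ^ n * (k + r + n * r) ^ n * (x - t0) ^ n / n.factorial := this
          _ = C * (x - t0) ^ n := by rw [hC]; ring
    have hcomp : (∫ s in t0..t, (s - t0) ^ n) = (t - t0) ^ (n+1) / (n+1) := by
      rw [intervalIntegral.integral_comp_sub_right (fun x => x ^ n) t0]
      simp [integral_pow]
    have hint : (∫ s in t0..t, C * (s - t0) ^ n) = C * ((t - t0) ^ (n+1) / (n+1)) := by
      rw [intervalIntegral.integral_const_mul, hcomp]
    have hstep : δ k t ≤ α * k * (C * ((t - t0) ^ (n+1) / (n+1))) := by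
      calc δ k t ≤ α * k * ∫ s in t0..t, δ (k+r) s := hmain
        _ ≤ α * k * ∫ s in t0..t, C * (s - t0) ^ n := by
            apply mul_le_mul_of_nonneg_left hmono (by positivity)
        _ = α * k * (C * ((t - t0) ^ (n+1) / (n+1))) := by rw [hint]
    refine hstep.trans ?_
    have hA : 0 ≤ t - t0 := by linarith [ht.1]
    have hkB : k ≤ k + (n+1 : ℕ) * r := by
      have : (0:ℝ) ≤ (n+1 : ℕ) * r := by positivity
      linarith
    have hfac : ((n+1 : ℕ).factorial : ℝ) = (n+1) * n.factorial := by
      push_cast [Nat.factorial_succ]; ring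
    have heq : k + r + (n:ℝ) * r = k + ((n:ℕ)+1 : ℕ) * r := by push_cast; ring
    rw [hC, heq]
    have hB : (0:ℝ) < k + ((n:ℕ)+1 : ℕ) * r := by
      have : (0:ℝ) ≤ ((n:ℕ)+1 : ℕ) * r := by positivity
      linarith
    have hfn : (0:ℝ) < n.factorial := by exact_mod_cast n.factorial_pos
    have hmonoB : k * (k + ((n:ℕ)+1 : ℕ) * r) ^ n ≤ (k + ((n:ℕ)+1 : ℕ) * r) ^ (n+1) := by
      rw [pow_succ]
      calc k * (k + ((n:ℕ)+1 : ℕ) * r) ^ n = (k + ((n:ℕ)+1 : ℕ) * r) ^ n * k := mul_comm _ _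
        _ ≤ (k + ((n:ℕ)+1 : ℕ) * r) ^ n * (k + ((n:ℕ)+1 : ℕ) * r) :=
            mul_le_mul_of_nonneg_left hkB (by positivity)
    calc α * k * (2 * α ^ n * (k + ((n:ℕ)+1:ℕ) * r) ^ n / ↑n.factorial *
          ((t - t0) ^ (n + 1) / (↑n + 1)))
        = 2 * α ^ (n+1) * (k * (k + ((n:ℕ)+1:ℕ) * r) ^ n) * (t - t0) ^ (n+1)
            / ((↑n + 1) * ↑n.factorial) := by
          field_simp
          ring
      _ ≤ 2 * α ^ (n+1) * ((k + ((n:ℕ)+1:ℕ) * r) ^ (n+1)) * (t - t0) ^ (n+1)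
            / ((↑n + 1) * ↑n.factorial) := by
          gcongr
      _ = 2 * α ^ (n + 1) * (k + ((n:ℕ)+1:ℕ) * r) ^ (n + 1) * (t - t0) ^ (n + 1)
            / ↑(n + 1).factorial := by
          rw [hfac]

include hα hr hmeas hbd hineq in
private lemma gw_zero_step (t0 : ℝ) (ht0 : t0 ∈ Set.Icc (0:ℝ) 1)
    (hzero : ∀ k > (0:ℝ), ∀ s ∈ Set.Icc (0:ℝ) t0, δ k s = 0) :
    ∀ k > (0:ℝ), ∀ t ∈ Set.Icc t0 (1:ℝ), α * Real.exp r * (t - t0) ≤ 1/2 → δ k t = 0 := by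
  intro k hk t ht hsmall
  have hA : 0 ≤ t - t0 := by linarith [ht.1]
  have key := gw_key α r hα hr δ hmeas hbd hineq t0 ht0 hzero
  set q : ℝ := α * Real.exp r * (t - t0) with hq
  have hq0 : 0 ≤ q := by positivity
  have hub : ∀ n : ℕ, δ k t ≤ 2 * Real.exp k * q ^ n := by
    intro n
    refine (key n k hk t ht).trans ?_
    have hx : (0:ℝ) ≤ k + n * r := by positivity
    have hexp : (k + n * r) ^ n / n.factorial ≤ Real.exp (k + n * r) := by
      have h1 : (k + n * r) ^ n / n.factorial
          ≤ ∑ i ∈ Finset.range (n+1), (k + n * r) ^ i / i.factorial :=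
        Finset.single_le_sum (f := fun i => (k + n * r) ^ i / (i.factorial : ℝ))
          (fun i _ => by positivity) (Finset.self_mem_range_succ n)
      exact h1.trans (Real.sum_le_exp_of_nonneg hx (n+1))
    have hfn : (0:ℝ) < n.factorial := by exact_mod_cast n.factorial_pos
    have h2 : 2 * α ^ n * (k + n * r) ^ n * (t - t0) ^ n / n.factorial
        = 2 * α ^ n * (t - t0) ^ n * ((k + n * r) ^ n / n.factorial) := by ring
    rw [h2]
    have h3 : 2 * α ^ n * (t - t0) ^ n * ((k + n * r) ^ n / n.factorial)
        ≤ 2 * α ^ n * (t - t0) ^ n * Real.exp (k + n * r) := by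
      apply mul_le_mul_of_nonneg_left hexp (by positivity)
    refine h3.trans ?_
    have h4 : Real.exp (k + n * r) = Real.exp k * (Real.exp r) ^ n := by
      rw [Real.exp_add, Real.exp_nat_mul]
    rw [h4, hq]
    rw [mul_pow, mul_pow]
    ring_nf
    exact le_refl _
  have htend : Filter.Tendsto (fun n : ℕ => 2 * Real.exp k * q ^ n) Filter.atTop (nhds 0) := by
    have hq1 : |q| < 1 := by
      rw [abs_of_nonneg hq0]
      calc q ≤ 1/2 := hsmall
        _ < 1 := by norm_num
    have := tendsto_pow_atTop_nhds_zero_of_abs_lt_one hq1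
    have := this.const_mul (2 * Real.exp k)
    simpa using this
  have hle : δ k t ≤ 0 := ge_of_tendsto' htend hub
  have hge : 0 ≤ δ k t := (hbd k hk t ⟨ht0.1.trans ht.1, ht.2⟩).1
  linarith

end aux

/-- Gronwall-type iteration from the one-dimensional uniqueness proof for BRTs. -/
theorem gronwall_iteration (α r : ℝ) (hα : 0 < α) (hr : 0 < r)
    (δ : ℝ → ℝ → ℝ)
    (hmeas : ∀ k > (0:ℝ), Measurable (δ k))
    (hbd : ∀ k > (0:ℝ), ∀ t ∈ Set.Icc (0:ℝ) 1, δ k t ∈ Set.Icc (0:ℝ) 2)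
    (hineq : ∀ k > (0:ℝ), ∀ t ∈ Set.Icc (0:ℝ) 1,
      δ k t ≤ α * k * ∫ s in (0:ℝ)..t, δ (k + r) s) :
    (∀ n : ℕ, 1 ≤ n → ∀ k > (0:ℝ), ∀ t ∈ Set.Icc (0:ℝ) 1,
      δ k t ≤ 2 * α ^ n * (k + n * r) ^ n * t ^ n / n.factorial) ∧
    (∀ k > (0:ℝ), ∀ t ∈ Set.Icc (0:ℝ) 1, δ k t = 0) := by
  have hzero0 : ∀ k > (0:ℝ), ∀ s ∈ Set.Icc (0:ℝ) (0:ℝ), δ k s = 0 := by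
    intro k hk s hs
    have : s = 0 := le_antisymm hs.2 hs.1
    subst this
    have h1 := hineq k hk 0 ⟨le_rfl, zero_le_one⟩
    simp at h1
    have h2 := (hbd k hk 0 ⟨le_rfl, zero_le_one⟩).1
    linarith
  constructor
  · intro n _ k hk t ht
    have := gw_key α r hα hr δ hmeas hbd hineq 0 ⟨le_rfl, zero_le_one⟩ hzero0 n k hk t
      ⟨ht.1, ht.2⟩
    simpa using this
  · -- bootstrap
    set c : ℝ := 1 / (2 * α * Real.exp r) with hc
    have hcpos : 0 < c := by positivity
    set P : ℝ → Prop := fun t0 => ∀ k > (0:ℝ), ∀ s ∈ Set.Icc (0:ℝ) t0, δ k s = 0 with hP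
    have hPmono : ∀ t0 t1, t1 ≤ t0 → P t0 → P t1 := by
      intro t0 t1 h h0 k hk s hs
      exact h0 k hk s ⟨hs.1, hs.2.trans h⟩
    have hstep : ∀ t0 ∈ Set.Icc (0:ℝ) 1, P t0 → P (min (t0 + c) 1) := by
      intro t0 ht0 hPt0 k hk s hs
      rcases le_total s t0 with h | h
      · exact hPt0 k hk s ⟨hs.1, h⟩
      · have hs1 : s ≤ 1 := hs.2.trans (min_le_right _ _)
        have hsc : s ≤ t0 + c := hs.2.trans (min_le_left _ _)
        have hsmall : α * Real.exp r * (s - t0) ≤ 1/2 := by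
          have h1 : α * Real.exp r * (s - t0) ≤ α * Real.exp r * c := by
            apply mul_le_mul_of_nonneg_left (by linarith) (by positivity)
          have h2 : α * Real.exp r * c = 1/2 := by
            rw [hc]
            field_simp
          linarith
        exact gw_zero_step α r hα hr δ hmeas hbd hineq t0 ht0 hPt0 k hk s ⟨h, hs1⟩ hsmall
    have hiter : ∀ m : ℕ, P (min (m * c) 1) := by
      intro m
      induction m with
      | zero =>
        have : min ((0:ℕ) * c) 1 = 0 := by
          simp
        rw [this]
        exact hzero0
      | succ m ih =>
        have hmem : min (m * c) 1 ∈ Set.Icc (0:ℝ) 1 := by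
          constructor
          · apply le_min (by positivity) zero_le_one
          · exact min_le_right _ _
        have hnext := hstep (min (m * c) 1) hmem ih
        apply hPmono _ _ _ hnext
        rcases le_total ((m:ℝ) * c) 1 with h | h
        · rw [min_eq_left h]
          exact min_le_min (by push_cast; linarith) le_rfl
        · rw [min_eq_right h]
          calc min (((m:ℕ)+1 : ℕ) * c) 1 ≤ 1 := min_le_right _ _
            _ ≤ min (1 + c) 1 := by rw [min_eq_right (by linarith)]
    obtain ⟨m, hm⟩ := exists_nat_ge (1 / c)
    have h1c : (1:ℝ) ≤ m * c := by
      rw [div_le_iff₀ hcpos] at hm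
      linarith
    have := hiter m
    rw [min_eq_right h1c] at this
    exact this
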